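/- For every x ≥ 0, 𝔼 (N(x) − M(x))² = ∫₀^x F(x−y)(1 − F(x−y)) dU(y), where U(x) = 𝔼 ρ(x) is the renewal function. -/

import Mathlib

/-!
Write `D_k = 1{S_k + η_k ≤ x} - F(x - S_k)`, i.e. `cdfResidual ν (x - S_k) η_k` with `ν` the law
of `η`. Since `F` vanishes on `(-∞, 0)` and `η ≥ 0`, `D_k = 0` as soon as `S_k > x`, so
`N(x) - M(x) = ∑_{k < m} D_k` for all large `m`. The variable `η_k` is independent of the first `k`
steps, which determine `S_k` and `D_j` for `j < k`; integrating out `η_k` first shows that the `D_k`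
are orthogonal and that `𝔼 D_k² = 𝔼 F(x - S_k)(1 - F(x - S_k))`. Summing over `k` gives the
integral against `U = ∑_k law(S_k)`. The partial sums are dominated by `ρ(x)`, and `ρ(x)²` is
integrable because `P(S_k ≤ x) ≤ eˣ (𝔼 e^{-ξ})^k` decays geometrically; dominated convergence
concludes.
-/

open MeasureTheory ProbabilityTheory Filter Real Set Topology
open scoped ENNReal

section CdfResidual

variable (ν : Measure ℝ)

noncomputable def cdfResidual (t y : ℝ) : ℝ := (if y ≤ t then 1 else 0) - cdf ν t

lemma measurable_cdfResidual : Measurable (Function.uncurry (cdfResidual ν)) :=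
  (Measurable.ite (measurableSet_le measurable_snd measurable_fst) measurable_const
    measurable_const).sub ((monotone_cdf ν).measurable.comp measurable_fst)

lemma Measurable.cdfResidual {Ω : Type*} {mΩ : MeasurableSpace Ω} {T Y : Ω → ℝ}
    (hT : Measurable T) (hY : Measurable Y) : Measurable fun ω => cdfResidual ν (T ω) (Y ω) :=
  (measurable_cdfResidual ν).comp (hT.prodMk hY)

lemma abs_cdfResidual_le_one (t y : ℝ) : |cdfResidual ν t y| ≤ 1 := by
  have := cdf_nonneg ν t
  have := cdf_le_one ν t
  unfold cdfResidual
  split_ifs <;> rw [abs_le] <;> constructor <;> linarith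

lemma measurable_cdf_sub_mul_one_sub_cdf_sub (x : ℝ) :
    Measurable fun y => cdf ν (x - y) * (1 - cdf ν (x - y)) :=
  have hF : Measurable fun y => cdf ν (x - y) :=
    (monotone_cdf ν).measurable.comp (measurable_const.sub measurable_id)
  hF.mul (measurable_const.sub hF)

lemma abs_cdf_mul_one_sub_cdf_le_one (t : ℝ) : |cdf ν t * (1 - cdf ν t)| ≤ 1 := by
  have := cdf_nonneg ν t
  have := cdf_le_one ν t
  rw [abs_le]
  constructor <;> nlinarith

variable [IsProbabilityMeasure ν]

lemma integral_ite_le_eq_cdf (t : ℝ) : ∫ y, (if y ≤ t then (1 : ℝ) else 0) ∂ν = cdf ν t := by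
  rw [cdf_eq_real, ← integral_indicator_one measurableSet_Iic]
  rfl

lemma integrable_ite_le (t : ℝ) : Integrable (fun y => if y ≤ t then (1 : ℝ) else 0) ν :=
  (integrable_const 1).indicator (s := Iic t) measurableSet_Iic

lemma integral_cdfResidual (t : ℝ) : ∫ y, cdfResidual ν t y ∂ν = 0 := by
  simp only [cdfResidual]
  rw [integral_sub (integrable_ite_le ν t) (integrable_const _), integral_ite_le_eq_cdf,
    integral_const, probReal_univ, one_smul, sub_self]

lemma integral_cdfResidual_sq (t : ℝ) :
    ∫ y, cdfResidual ν t y ^ 2 ∂ν = cdf ν t * (1 - cdf ν t) := by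
  have hsq : ∀ y, cdfResidual ν t y ^ 2
      = (if y ≤ t then 1 else 0) * (1 - 2 * cdf ν t) + cdf ν t ^ 2 := by
    intro y; unfold cdfResidual; split_ifs <;> ring
  simp only [hsq]
  rw [integral_add ((integrable_ite_le ν t).mul_const _) (integrable_const _), integral_mul_const,
    integral_ite_le_eq_cdf, integral_const, probReal_univ, one_smul]
  ring

lemma cdf_eq_zero_of_neg (hν : ∀ᵐ y ∂ν, 0 ≤ y) {t : ℝ} (ht : t < 0) : cdf ν t = 0 := by
  rw [cdf_eq_real, measureReal_eq_zero_iff]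
  exact measure_mono_null (fun y hy => not_le.2 (lt_of_le_of_lt hy ht)) (ae_iff.1 hν)

lemma cdfResidual_eq_zero_of_neg (hν : ∀ᵐ y ∂ν, 0 ≤ y) {t y : ℝ} (ht : t < 0) (hy : 0 ≤ y) :
    cdfResidual ν t y = 0 := by
  rw [cdfResidual, cdf_eq_zero_of_neg ν hν ht, if_neg (by linarith)]
  norm_num

end CdfResidual

section Freezing

variable {Ω α β E : Type*} [MeasurableSpace Ω] [MeasurableSpace α] [MeasurableSpace β]
  [NormedAddCommGroup E] [NormedSpace ℝ E] {μ : Measure Ω} [IsFiniteMeasure μ]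

theorem ProbabilityTheory.IndepFun.integral_comp_eq_integral_integral {X : Ω → α} {Y : Ω → β}
    (hXY : IndepFun X Y μ) (hX : AEMeasurable X μ) (hY : AEMeasurable Y μ) {G : α → β → E}
    (hG : StronglyMeasurable (Function.uncurry G))
    (hint : Integrable (fun ω => G (X ω) (Y ω)) μ) :
    ∫ ω, G (X ω) (Y ω) ∂μ = ∫ ω, ∫ y, G (X ω) y ∂(μ.map Y) ∂μ := by
  have hlaw := (indepFun_iff_map_prod_eq_prod_map_map hX hY).mp hXY
  have hXYm : AEMeasurable (fun ω => (X ω, Y ω)) μ := hX.prodMk hY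
  have hGint : Integrable (Function.uncurry G) ((μ.map X).prod (μ.map Y)) := by
    rw [← hlaw]; exact (integrable_map_measure hG.aestronglyMeasurable hXYm).mpr hint
  calc ∫ ω, G (X ω) (Y ω) ∂μ
      = ∫ p, Function.uncurry G p ∂(μ.map fun ω => (X ω, Y ω)) :=
        (integral_map hXYm hG.aestronglyMeasurable).symm
    _ = ∫ a, ∫ y, G a y ∂(μ.map Y) ∂(μ.map X) := by rw [hlaw]; exact integral_prod _ hGint
    _ = ∫ ω, ∫ y, G (X ω) y ∂(μ.map Y) ∂μ :=
        integral_map hX hG.integral_prod_right'.aestronglyMeasurable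

end Freezing

section IndepResidual

variable {Ω : Type*} [MeasurableSpace Ω] {μ : Measure Ω} [IsProbabilityMeasure μ] {T Y : Ω → ℝ}

lemma ProbabilityTheory.IndepFun.integral_mul_cdfResidual_comp_eq_zero {Z : Ω → ℝ}
    (hind : IndepFun (fun ω => (Z ω, T ω)) Y μ) (hZ : Integrable Z μ) (hT : Measurable T)
    (hY : Measurable Y) :
    ∫ ω, Z ω * cdfResidual (μ.map Y) (T ω) (Y ω) ∂μ = 0 := by
  have := Measure.isProbabilityMeasure_map (μ := μ) hY.aemeasurable
  have hG : Measurable fun (p : (ℝ × ℝ) × ℝ) => p.1.1 * cdfResidual (μ.map Y) p.1.2 p.2 :=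
    measurable_fst.fst.mul (measurable_fst.snd.cdfResidual _ measurable_snd)
  have hint : Integrable (fun ω => Z ω * cdfResidual (μ.map Y) (T ω) (Y ω)) μ :=
    hZ.mul_bdd (hT.cdfResidual _ hY).aestronglyMeasurable
      (ae_of_all _ fun ω => abs_cdfResidual_le_one _ _ _)
  rw [hind.integral_comp_eq_integral_integral (G := fun p y => p.1 * cdfResidual (μ.map Y) p.2 y)
    (hZ.aemeasurable.prodMk hT.aemeasurable) hY.aemeasurable hG.stronglyMeasurable hint]
  simp [integral_const_mul, integral_cdfResidual]

lemma ProbabilityTheory.IndepFun.integral_cdfResidual_comp_sq (hind : IndepFun T Y μ)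
    (hT : Measurable T) (hY : Measurable Y) :
    ∫ ω, cdfResidual (μ.map Y) (T ω) (Y ω) ^ 2 ∂μ
      = ∫ ω, cdf (μ.map Y) (T ω) * (1 - cdf (μ.map Y) (T ω)) ∂μ := by
  have := Measure.isProbabilityMeasure_map (μ := μ) hY.aemeasurable
  have hint : Integrable (fun ω => cdfResidual (μ.map Y) (T ω) (Y ω) ^ 2) μ :=
    Integrable.of_bound ((hT.cdfResidual _ hY).pow_const 2).aestronglyMeasurable 1
      (ae_of_all _ fun ω => by
        simpa [abs_pow] using pow_le_one₀ (n := 2) (abs_nonneg _)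
          (abs_cdfResidual_le_one (μ.map Y) (T ω) (Y ω)))
  rw [hind.integral_comp_eq_integral_integral (G := fun t y => cdfResidual (μ.map Y) t y ^ 2)
    hT.aemeasurable hY.aemeasurable ((measurable_cdfResidual _).pow_const 2).stronglyMeasurable
    hint]
  simp only [integral_cdfResidual_sq]

end IndepResidual

section Orthogonality

variable {Ω : Type*} [MeasurableSpace Ω] {μ : Measure Ω}

lemma integral_sq_sum_of_orthogonal {ι : Type*} {D : ι → Ω → ℝ} (s : Finset ι)
    (hint : ∀ j ∈ s, ∀ k ∈ s, Integrable (fun ω => D j ω * D k ω) μ)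
    (horth : ∀ j ∈ s, ∀ k ∈ s, j ≠ k → ∫ ω, D j ω * D k ω ∂μ = 0) :
    ∫ ω, (∑ k ∈ s, D k ω) ^ 2 ∂μ = ∑ k ∈ s, ∫ ω, D k ω ^ 2 ∂μ := by
  simp_rw [sq, Finset.sum_mul_sum]
  rw [integral_finsetSum _ fun j hj => integrable_finsetSum _ fun k hk => hint j hj k hk]
  refine Finset.sum_congr rfl fun j hj => ?_
  rw [integral_finsetSum _ fun k hk => hint j hj k hk,
    Finset.sum_eq_single_of_mem j hj fun k hk hkj => horth j hj k hk hkj.symm]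

end Orthogonality

section PastIndependence

variable {Ω ι β : Type*} [LinearOrder ι] [mβ : MeasurableSpace β] {X : ι → Ω → β}

lemma measurable_iSup_lt_comap {j k : ι} (hjk : j < k) :
    Measurable[⨆ i < k, mβ.comap (X i)] (X j) :=
  (comap_measurable (X j)).mono (le_biSup (fun i => mβ.comap (X i)) hjk) le_rfl

lemma ProbabilityTheory.iIndepFun.indepFun_of_measurable_iSup_lt [MeasurableSpace Ω]
    {μ : Measure Ω} {γ : Type*} [MeasurableSpace γ] (hX : iIndepFun X μ)
    (hXm : ∀ i, Measurable (X i)) {k : ι} {f : Ω → γ}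
    (hf : Measurable[⨆ j < k, mβ.comap (X j)] f) : IndepFun f (X k) μ := by
  have hpast := indep_iSup_of_disjoint (fun i => (hXm i).comap_le) hX.iIndep
    (S := {j | j < k}) (T := {k}) (by simp)
  rw [iSup_singleton] at hpast
  exact (IndepFun_iff_Indep _ _ _).2 (indep_of_indep_of_le_left hpast hf.comap_le)

end PastIndependence

section Counting

variable {Ω : Type*} [MeasurableSpace Ω] {μ : Measure Ω} {A : ℕ → Set Ω}

lemma lintegral_tsum_indicator_one_sq (hA : ∀ k, MeasurableSet (A k)) :
    ∫⁻ ω, (∑' k, (A k).indicator 1 ω) ^ 2 ∂μ = ∑' j, ∑' k, μ (A j ∩ A k) := by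
  have hsq : ∀ ω, (∑' k, (A k).indicator (1 : Ω → ℝ≥0∞) ω) ^ 2
      = ∑' j, ∑' k, (A j ∩ A k).indicator 1 ω := by
    intro ω
    simp_rw [sq, ← ENNReal.tsum_mul_right, ← ENNReal.tsum_mul_left, Set.inter_indicator_one]
    rfl
  simp_rw [hsq]
  rw [lintegral_tsum fun j => (Measurable.tsum fun k =>
    measurable_one.indicator ((hA j).inter (hA k))).aemeasurable]
  refine tsum_congr fun j => ?_
  rw [lintegral_tsum fun k => (measurable_one.indicator ((hA j).inter (hA k))).aemeasurable]
  exact tsum_congr fun k => lintegral_indicator_one ((hA j).inter (hA k))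

lemma integrable_toReal_tsum_indicator_one_sq (hA : ∀ k, MeasurableSet (A k))
    (hfin : ∑' j, ∑' k, μ (A j ∩ A k) ≠ ∞) :
    Integrable (fun ω => (∑' k, (A k).indicator (1 : Ω → ℝ≥0∞) ω).toReal ^ 2) μ := by
  simp_rw [← ENNReal.toReal_pow]
  refine integrable_toReal_of_lintegral_ne_top ?_ (by rwa [lintegral_tsum_indicator_one_sq hA])
  exact ((Measurable.tsum fun k => measurable_one.indicator (hA k)).pow_const 2).aemeasurable

lemma tsum_tsum_pow_max_ne_top {r : ℝ≥0∞} (hr : r < 1) : ∑' j : ℕ, ∑' k : ℕ, r ^ max j k ≠ ∞ := by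
  set q := r ^ (2⁻¹ : ℝ)
  have hq : q < 1 := ENNReal.rpow_lt_one hr (by norm_num)
  have hqr : r = q ^ 2 := by
    rw [← ENNReal.rpow_natCast, ← ENNReal.rpow_mul]; norm_num
  have hle : ∀ j k : ℕ, r ^ max j k ≤ q ^ j * q ^ k := fun j k => by
    rw [hqr, ← pow_mul, ← pow_add]
    exact pow_le_pow_right_of_le_one' hq.le (by omega)
  refine ne_top_of_le_ne_top ?_ (ENNReal.tsum_le_tsum fun j => ENNReal.tsum_le_tsum (hle j))
  simp_rw [ENNReal.tsum_mul_left, ENNReal.tsum_mul_right, ENNReal.tsum_geometric]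
  exact ENNReal.mul_ne_top (ENNReal.inv_ne_top.2 (tsub_pos_of_lt hq).ne')
    (ENNReal.inv_ne_top.2 (tsub_pos_of_lt hq).ne')

variable {C r : ℝ≥0∞}

lemma tsum_measure_ne_top_of_le_geometric (hC : C ≠ ∞) (hr : r < 1)
    (hA : ∀ k, μ (A k) ≤ C * r ^ k) : ∑' k, μ (A k) ≠ ∞ := by
  refine ne_top_of_le_ne_top ?_ (ENNReal.tsum_le_tsum hA)
  rw [ENNReal.tsum_mul_left, ENNReal.tsum_geometric]
  exact ENNReal.mul_ne_top hC (ENNReal.inv_ne_top.2 (tsub_pos_of_lt hr).ne')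

lemma tsum_tsum_measure_inter_ne_top_of_le_geometric (hC : C ≠ ∞) (hr : r < 1)
    (hA : ∀ k, μ (A k) ≤ C * r ^ k) : ∑' j, ∑' k, μ (A j ∩ A k) ≠ ∞ := by
  have hle : ∀ j k, μ (A j ∩ A k) ≤ C * r ^ max j k := fun j k => by
    rcases le_total j k with h | h
    · rw [max_eq_right h]; exact (measure_mono inter_subset_right).trans (hA k)
    · rw [max_eq_left h]; exact (measure_mono inter_subset_left).trans (hA j)
  refine ne_top_of_le_ne_top ?_ (ENNReal.tsum_le_tsum fun j => ENNReal.tsum_le_tsum (hle j))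
  simp_rw [ENNReal.tsum_mul_left]
  exact ENNReal.mul_ne_top hC (tsum_tsum_pow_max_ne_top hr)

end Counting

section Chernoff

variable {Ω : Type*} [MeasurableSpace Ω] {μ : Measure Ω} [IsProbabilityMeasure μ]

lemma mgf_lt_one_of_pos {X : Ω → ℝ} (hX : AEMeasurable X μ) (hpos : ∀ᵐ ω ∂μ, 0 < X ω) {t : ℝ}
    (ht : t < 0) : mgf X μ t < 1 := by
  have hlt : ∀ᵐ ω ∂μ, exp (t * X ω) < 1 :=
    hpos.mono fun ω h => exp_lt_one_iff.2 (mul_neg_of_neg_of_pos ht h)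
  have hint : Integrable (fun ω => exp (t * X ω)) μ :=
    Integrable.of_bound (hX.const_mul t).exp.aestronglyMeasurable 1
      (hlt.mono fun ω h => by rw [norm_of_nonneg (exp_pos _).le]; exact h.le)
  have hgap : 0 < ∫ ω, (1 - exp (t * X ω)) ∂μ := by
    rw [integral_pos_iff_support_of_nonneg_ae (hlt.mono fun ω h => sub_nonneg.2 h.le)
      ((integrable_const 1).sub hint)]
    refine pos_iff_ne_zero.2 fun h0 => ?_
    obtain ⟨ω, hω, hω'⟩ := ((measure_eq_zero_iff_ae_notMem.1 h0).and hlt).exists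
    exact hω (sub_ne_zero.2 hω'.ne')
  rw [integral_sub (integrable_const 1) hint, integral_const, probReal_univ, one_smul] at hgap
  rw [mgf]
  linarith

lemma measure_sum_range_le_le {ξ : ℕ → Ω → ℝ} (hξ : ∀ i, Measurable (ξ i))
    (hind : iIndepFun ξ μ) (hident : ∀ i, IdentDistrib (ξ i) (ξ 0) μ μ)
    (hnn : ∀ i, ∀ᵐ ω ∂μ, 0 ≤ ξ i ω) (x : ℝ) (k : ℕ) :
    μ {ω | ∑ i ∈ Finset.range k, ξ i ω ≤ x}
      ≤ ENNReal.ofReal (exp x) * ENNReal.ofReal (mgf (ξ 0) μ (-1)) ^ k := by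
  have hmgf : mgf (fun ω => ∑ i ∈ Finset.range k, ξ i ω) μ (-1) = mgf (ξ 0) μ (-1) ^ k := by
    rw [← Finset.sum_fn, hind.mgf_sum hξ,
      Finset.prod_congr rfl fun i _ => mgf_congr_of_identDistrib _ _ (hident i) _,
      Finset.prod_const, Finset.card_range]
  have hint : Integrable (fun ω => exp (-1 * ∑ i ∈ Finset.range k, ξ i ω)) μ := by
    refine Integrable.of_bound
      ((Finset.measurable_sum _ fun i _ => hξ i).const_mul _).exp.aestronglyMeasurable 1 ?_
    filter_upwards [ae_all_iff.2 hnn] with ω hω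
    rw [norm_of_nonneg (exp_pos _).le, exp_le_one_iff]
    linarith [Finset.sum_nonneg fun i (_ : i ∈ Finset.range k) => hω i]
  have h := measure_le_le_exp_mul_mgf x (by norm_num : (-1 : ℝ) ≤ 0) hint
  rw [hmgf, neg_neg, one_mul] at h
  rw [← ofReal_measureReal, ← ENNReal.ofReal_pow mgf_nonneg, ← ENNReal.ofReal_mul (exp_pos x).le]
  exact ENNReal.ofReal_le_ofReal h

end Chernoff

section Pathwise

variable {s e : ℕ → ℝ} {x : ℝ}

lemma setOf_le_eq_Iio_ncard (hs : Monotone s) (hx : ∀ᶠ k in atTop, x < s k) :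
    {k | s k ≤ x} = Iio {k | s k ≤ x}.ncard := by
  have hlower : IsLowerSet {k | s k ≤ x} := fun j k hkj hj => (hs hkj).trans hj
  rcases hlower.eq_univ_or_Iio with huniv | ⟨n, hn⟩
  · obtain ⟨k, hk⟩ := hx.exists
    have hk' : k ∈ {k | s k ≤ x} := by rw [huniv]; trivial
    exact absurd hk' (not_le.2 hk)
  · rw [hn, ncard_Iio_nat]

lemma le_iff_lt_ncard (hs : Monotone s) (hx : ∀ᶠ k in atTop, x < s k) (k : ℕ) :
    s k ≤ x ↔ k < {k | s k ≤ x}.ncard :=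
  Set.ext_iff.1 (setOf_le_eq_Iio_ncard hs hx) k

lemma tsum_ite_le_eq_ncard (hs : Monotone s) (hx : ∀ᶠ k in atTop, x < s k) :
    ∑' k, (if s k ≤ x then (1 : ℝ≥0∞) else 0) = {k | s k ≤ x}.ncard := by
  rw [tsum_eq_sum (s := Finset.range {k | s k ≤ x}.ncard) fun k hk => by
    rw [if_neg (by rwa [le_iff_lt_ncard hs hx, ← Finset.mem_range])]]
  rw [Finset.sum_congr rfl fun k hk => if_pos ((le_iff_lt_ncard hs hx k).2 (Finset.mem_range.1 hk))]
  simp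

variable (ν : Measure ℝ) [IsProbabilityMeasure ν]

lemma sum_range_cdfResidual_eq_sum_range_ncard (hν : ∀ᵐ y ∂ν, 0 ≤ y) (hs : Monotone s)
    (hx : ∀ᶠ k in atTop, x < s k) (he : ∀ k, 0 ≤ e k) {m : ℕ} (hm : {k | s k ≤ x}.ncard ≤ m) :
    ∑ k ∈ Finset.range m, cdfResidual ν (x - s k) (e k)
      = ∑ k ∈ Finset.range {k | s k ≤ x}.ncard, cdfResidual ν (x - s k) (e k) := by
  refine (Finset.sum_subset (Finset.range_subset_range.2 hm) fun k _ hk => ?_).symm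
  rw [Finset.mem_range, ← le_iff_lt_ncard hs hx, not_le] at hk
  exact cdfResidual_eq_zero_of_neg ν hν (by linarith) (he k)

lemma sum_range_cdfResidual_eq (hν : ∀ᵐ y ∂ν, 0 ≤ y) (hs : Monotone s)
    (hx : ∀ᶠ k in atTop, x < s k) (he : ∀ k, 0 ≤ e k) {m : ℕ} (hm : {k | s k ≤ x}.ncard ≤ m) :
    ∑ k ∈ Finset.range m, cdfResidual ν (x - s k) (e k)
      = {k | s k + e k ≤ x}.ncard - ∑ k ∈ Finset.range {k | s k ≤ x}.ncard, cdf ν (x - s k) := by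
  have hN : {k | s k + e k ≤ x}
      = ↑((Finset.range {k | s k ≤ x}.ncard).filter fun k => e k ≤ x - s k) := by
    ext k
    simp only [Finset.coe_filter, Finset.mem_range, mem_ofPred_eq, ← le_iff_lt_ncard hs hx]
    constructor
    · intro h; exact ⟨by linarith [he k], by linarith⟩
    · intro h; linarith [h.2]
  rw [sum_range_cdfResidual_eq_sum_range_ncard ν hν hs hx he hm, hN, ncard_coe_finset,
    Finset.card_filter]
  simp only [cdfResidual, Finset.sum_sub_distrib]
  push_cast
  rfl

lemma abs_sum_range_cdfResidual_le (hν : ∀ᵐ y ∂ν, 0 ≤ y) (hs : Monotone s)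
    (hx : ∀ᶠ k in atTop, x < s k) (he : ∀ k, 0 ≤ e k) (m : ℕ) :
    |∑ k ∈ Finset.range m, cdfResidual ν (x - s k) (e k)| ≤ {k | s k ≤ x}.ncard := by
  have hcard : ∀ m' : ℕ, |∑ k ∈ Finset.range m', cdfResidual ν (x - s k) (e k)| ≤ m' :=
    fun m' => (Finset.abs_sum_le_sum_abs _ _).trans <| by
      simpa using Finset.sum_le_sum (s := Finset.range m') fun k _ =>
        abs_cdfResidual_le_one ν (x - s k) (e k)
  rcases le_total m {k | s k ≤ x}.ncard with h | h
  · exact (hcard m).trans (by exact_mod_cast h)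
  · rw [sum_range_cdfResidual_eq_sum_range_ncard ν hν hs hx he h]
    exact hcard _

end Pathwise

section Convergence

variable {Ω : Type*} [MeasurableSpace Ω] {μ : Measure Ω} {S E : ℕ → Ω → ℝ} {x : ℝ}

theorem tendsto_integral_sq_sum_range_cdfResidual (ν : Measure ℝ) [IsProbabilityMeasure ν]
    (hν : ∀ᵐ y ∂ν, 0 ≤ y) (hS : ∀ k, Measurable (S k)) (hE : ∀ k, Measurable (E k))
    (hmono : ∀ᵐ ω ∂μ, Monotone fun k => S k ω) (hEnn : ∀ᵐ ω ∂μ, ∀ k, 0 ≤ E k ω)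
    (hsum : ∑' k, μ {ω | S k ω ≤ x} ≠ ∞)
    (hsum₂ : ∑' j, ∑' k, μ ({ω | S j ω ≤ x} ∩ {ω | S k ω ≤ x}) ≠ ∞) :
    Tendsto (fun m => ∫ ω, (∑ k ∈ Finset.range m, cdfResidual ν (x - S k ω) (E k ω)) ^ 2 ∂μ)
      atTop (𝓝 (∫ ω, (({k | S k ω + E k ω ≤ x}.ncard : ℝ)
        - ∑ k ∈ Finset.range {k | S k ω ≤ x}.ncard, cdf ν (x - S k ω)) ^ 2 ∂μ)) := by
  have hA : ∀ k, MeasurableSet {ω | S k ω ≤ x} := fun k => measurableSet_le (hS k) measurable_const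
  have hgood : ∀ᵐ ω ∂μ, Monotone (fun k => S k ω) ∧ (∀ k, 0 ≤ E k ω) ∧
      ∀ᶠ k in atTop, x < S k ω := by
    filter_upwards [hmono, hEnn, ae_eventually_notMem hsum] with ω hmo hnn hev
    exact ⟨hmo, hnn, hev.mono fun k hk => not_le.1 hk⟩
  -- the dominating function is a.s. `{k | S k ω ≤ x}.ncard ^ 2`, i.e. `ρ(x)²`
  refine tendsto_integral_of_dominated_convergence
    (fun ω => (∑' k, {ω | S k ω ≤ x}.indicator (1 : Ω → ℝ≥0∞) ω).toReal ^ 2)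
    (fun m => ?_) (integrable_toReal_tsum_indicator_one_sq hA hsum₂) (fun m => ?_) ?_
  · exact ((Finset.measurable_sum _ fun k _ =>
      (measurable_const.sub (hS k)).cdfResidual ν (hE k)).pow_const 2).aestronglyMeasurable
  · filter_upwards [hgood] with ω ⟨hmo, hnn, hev⟩
    have hcount : ∑' k, {ω | S k ω ≤ x}.indicator (1 : Ω → ℝ≥0∞) ω = {k | S k ω ≤ x}.ncard := by
      simpa [indicator_apply] using tsum_ite_le_eq_ncard hmo hev
    rw [hcount, ENNReal.toReal_natCast, Real.norm_eq_abs, abs_pow]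
    exact pow_le_pow_left₀ (abs_nonneg _) (abs_sum_range_cdfResidual_le ν hν hmo hev hnn m) 2
  · filter_upwards [hgood] with ω ⟨hmo, hnn, hev⟩
    refine tendsto_atTop_of_eventually_const (i₀ := {k | S k ω ≤ x}.ncard) fun m hm => ?_
    rw [sum_range_cdfResidual_eq ν hν hmo hev hnn hm]

end Convergence

section SumMeasure

variable {ι α : Type*} [MeasurableSpace α] {m : ι → Measure α} {s : Set α}

lemma hasSum_setIntegral_sum_measure (hs : MeasurableSet s) (hfin : Measure.sum m s ≠ ∞)
    {g : α → ℝ} (hg : Measurable g) {C : ℝ} (hC : ∀ y, |g y| ≤ C) :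
    HasSum (fun k => ∫ y in s, g y ∂m k) (∫ y in s, g y ∂Measure.sum m) := by
  have : IsFiniteMeasure ((Measure.sum m).restrict s) := isFiniteMeasure_restrict.2 hfin
  have hint : Integrable g ((Measure.sum m).restrict s) :=
    Integrable.of_bound hg.aestronglyMeasurable C (ae_of_all _ hC)
  rw [Measure.restrict_sum _ hs] at hint ⊢
  exact hasSum_integral_measure hint

end SumMeasure

section Renewal

variable {Ω : Type*} [MeasurableSpace Ω] {μ : Measure Ω}

lemma hasSum_setIntegral_cdf_mul_one_sub_cdf {S : ℕ → Ω → ℝ} (hS : ∀ k, Measurable (S k))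
    (ν : Measure ℝ) {x : ℝ} (hsum : ∑' k, μ {ω | S k ω ≤ x} ≠ ∞) :
    HasSum (fun k => ∫ y in Icc 0 x, cdf ν (x - y) * (1 - cdf ν (x - y)) ∂(μ.map (S k)))
      (∫ y in Icc 0 x, cdf ν (x - y) * (1 - cdf ν (x - y))
        ∂(Measure.sum fun k => μ.map (S k))) := by
  refine hasSum_setIntegral_sum_measure measurableSet_Icc (ne_top_of_le_ne_top hsum ?_)
    (measurable_cdf_sub_mul_one_sub_cdf_sub ν x) fun y => abs_cdf_mul_one_sub_cdf_le_one ν (x - y)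
  rw [Measure.sum_apply _ measurableSet_Icc]
  exact ENNReal.tsum_le_tsum fun k =>
    (Measure.map_apply (hS k) measurableSet_Icc).trans_le (measure_mono fun ω h => h.2)

end Renewal

section PerturbedWalk

variable {Ω : Type*} {ξ η : ℕ → Ω → ℝ}

abbrev pastMeasurableSpace (ξ η : ℕ → Ω → ℝ) (k : ℕ) : MeasurableSpace Ω :=
  ⨆ i < k, MeasurableSpace.comap (fun ω => (ξ i ω, η i ω)) inferInstance

lemma measurable_past_step {j k : ℕ} (hjk : j < k) :
    Measurable[pastMeasurableSpace ξ η k] fun ω => (ξ j ω, η j ω) :=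
  measurable_iSup_lt_comap (X := fun i ω => (ξ i ω, η i ω)) hjk

lemma measurable_past_sum_range {j k : ℕ} (hjk : j ≤ k) :
    Measurable[pastMeasurableSpace ξ η k] fun ω => ∑ i ∈ Finset.range j, ξ i ω :=
  Finset.measurable_sum _ fun i hi =>
    (measurable_past_step (by rw [Finset.mem_range] at hi; omega)).fst

variable [MeasurableSpace Ω] {μ : Measure Ω}

lemma ae_monotone_sum_range (hnn : ∀ i, ∀ᵐ ω ∂μ, 0 ≤ ξ i ω) :
    ∀ᵐ ω ∂μ, Monotone fun k => ∑ i ∈ Finset.range k, ξ i ω := by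
  filter_upwards [ae_all_iff.2 hnn] with ω hω
  exact monotone_nat_of_le_succ fun k => by
    rw [Finset.sum_range_succ]; linarith [hω k]

lemma indepFun_snd_of_measurable_past (hmeas : ∀ k, Measurable fun ω => (ξ k ω, η k ω))
    (hindep : iIndepFun (fun k ω => (ξ k ω, η k ω)) μ) {k : ℕ} {γ : Type*} [MeasurableSpace γ]
    {f : Ω → γ} (hf : Measurable[pastMeasurableSpace ξ η k] f) : IndepFun f (η k) μ :=
  (hindep.indepFun_of_measurable_iSup_lt hmeas hf).comp measurable_id measurable_snd

variable [IsProbabilityMeasure μ]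

lemma integral_cdfResidual_mul_cdfResidual_eq_zero
    (hmeas : ∀ k, Measurable fun ω => (ξ k ω, η k ω))
    (hindep : iIndepFun (fun k ω => (ξ k ω, η k ω)) μ) {ν : Measure ℝ}
    (hν : ∀ k, μ.map (η k) = ν) (x : ℝ) {j k : ℕ} (hjk : j < k) :
    ∫ ω, cdfResidual ν (x - ∑ i ∈ Finset.range j, ξ i ω) (η j ω)
      * cdfResidual ν (x - ∑ i ∈ Finset.range k, ξ i ω) (η k ω) ∂μ = 0 := by
  obtain rfl := hν k
  have hD : Measurable[pastMeasurableSpace ξ η k]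
      fun ω => cdfResidual (μ.map (η k)) (x - ∑ i ∈ Finset.range j, ξ i ω) (η j ω) :=
    (measurable_const.sub (measurable_past_sum_range hjk.le)).cdfResidual _
      (measurable_past_step hjk).snd
  refine (indepFun_snd_of_measurable_past hmeas hindep (hD.prodMk (measurable_const.sub
    (measurable_past_sum_range le_rfl)))).integral_mul_cdfResidual_comp_eq_zero ?_
    (measurable_const.sub (Finset.measurable_sum _ fun i _ => (hmeas i).fst))
    (hmeas k).snd
  exact Integrable.of_bound (hD.mono (iSup₂_le fun i _ => (hmeas i).comap_le)
    le_rfl).aestronglyMeasurable 1 (ae_of_all _ fun ω => abs_cdfResidual_le_one _ _ _)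

lemma integral_cdfResidual_sq_eq_setIntegral
    (hmeas : ∀ k, Measurable fun ω => (ξ k ω, η k ω))
    (hindep : iIndepFun (fun k ω => (ξ k ω, η k ω)) μ) {ν : Measure ℝ} [IsProbabilityMeasure ν]
    (hν : ∀ k, μ.map (η k) = ν) (hν0 : ∀ᵐ y ∂ν, 0 ≤ y) (hξ : ∀ i, ∀ᵐ ω ∂μ, 0 ≤ ξ i ω)
    (x : ℝ) (k : ℕ) :
    ∫ ω, cdfResidual ν (x - ∑ i ∈ Finset.range k, ξ i ω) (η k ω) ^ 2 ∂μ
      = ∫ y in Icc 0 x, cdf ν (x - y) * (1 - cdf ν (x - y))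
          ∂(μ.map fun ω => ∑ i ∈ Finset.range k, ξ i ω) := by
  obtain rfl := hν k
  have hS : Measurable fun ω => ∑ i ∈ Finset.range k, ξ i ω :=
    Finset.measurable_sum _ fun i _ => (hmeas i).fst
  have hS0 : ∀ᵐ y ∂(μ.map fun ω => ∑ i ∈ Finset.range k, ξ i ω), 0 ≤ y := by
    rw [ae_map_iff hS.aemeasurable measurableSet_Ici]
    filter_upwards [ae_all_iff.2 hξ] with ω hω
    exact Finset.sum_nonneg fun i _ => hω i
  have hind := indepFun_snd_of_measurable_past hmeas hindep
    (f := fun ω => x - ∑ i ∈ Finset.range k, ξ i ω)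
    (measurable_const.sub (measurable_past_sum_range le_rfl))
  rw [hind.integral_cdfResidual_comp_sq (measurable_const.sub hS) (hmeas k).snd,
    setIntegral_eq_integral_of_ae_compl_eq_zero,
    integral_map hS.aemeasurable (measurable_cdf_sub_mul_one_sub_cdf_sub _ x).aestronglyMeasurable]
  filter_upwards [hS0] with y hy hyx
  have hxy : x - y < 0 := by
    simp only [mem_Icc, not_and, not_le] at hyx
    linarith [hyx hy]
  rw [cdf_eq_zero_of_neg _ hν0 hxy, zero_mul]

lemma integral_sq_sum_range_cdfResidual (hmeas : ∀ k, Measurable fun ω => (ξ k ω, η k ω))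
    (hindep : iIndepFun (fun k ω => (ξ k ω, η k ω)) μ) {ν : Measure ℝ} [IsProbabilityMeasure ν]
    (hν : ∀ k, μ.map (η k) = ν) (hν0 : ∀ᵐ y ∂ν, 0 ≤ y) (hξ : ∀ i, ∀ᵐ ω ∂μ, 0 ≤ ξ i ω)
    (x : ℝ) (m : ℕ) :
    ∫ ω, (∑ k ∈ Finset.range m, cdfResidual ν (x - ∑ i ∈ Finset.range k, ξ i ω) (η k ω)) ^ 2 ∂μ
      = ∑ k ∈ Finset.range m, ∫ y in Icc 0 x, cdf ν (x - y) * (1 - cdf ν (x - y))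
          ∂(μ.map fun ω => ∑ i ∈ Finset.range k, ξ i ω) := by
  have hD : ∀ k, Measurable fun ω => cdfResidual ν (x - ∑ i ∈ Finset.range k, ξ i ω) (η k ω) :=
    fun k => (measurable_const.sub (Finset.measurable_sum _ fun i _ => (hmeas i).fst)).cdfResidual
      ν (hmeas k).snd
  rw [integral_sq_sum_of_orthogonal]
  · exact Finset.sum_congr rfl fun k _ =>
      integral_cdfResidual_sq_eq_setIntegral hmeas hindep hν hν0 hξ x k
  · refine fun j _ k _ => Integrable.of_bound ((hD j).mul (hD k)).aestronglyMeasurable 1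
      (ae_of_all _ fun ω => ?_)
    simpa [abs_mul] using mul_le_one₀ (abs_cdfResidual_le_one _ _ _) (abs_nonneg _)
      (abs_cdfResidual_le_one _ _ _)
  · intro j _ k _ hjk
    rcases hjk.lt_or_gt with h | h
    · exact integral_cdfResidual_mul_cdfResidual_eq_zero hmeas hindep hν x h
    · exact (integral_congr_ae (ae_of_all _ fun ω => mul_comm _ _)).trans
        (integral_cdfResidual_mul_cdfResidual_eq_zero hmeas hindep hν x h)

end PerturbedWalk

theorem perturbed_rw_shot_noise_variance_general
    {Ω : Type*} [MeasurableSpace Ω] (Pr : Measure Ω) [IsProbabilityMeasure Pr]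
    (ξ η : ℕ → Ω → ℝ)
    (hmeas : ∀ k, Measurable (fun ω => (ξ k ω, η k ω)))
    -- ξ > 0 and η ≥ 0
    (hpos : ∀ k, ∀ᵐ ω ∂Pr, 0 < ξ k ω) (hnonneg : ∀ k, ∀ᵐ ω ∂Pr, 0 ≤ η k ω)
    -- (ξ_k, η_k)_{k≥1} are i.i.d. copies of the vector (ξ, η)
    (hid : ∀ k, Measure.map (fun ω => (ξ k ω, η k ω)) Pr
      = Measure.map (fun ω => (ξ 0 ω, η 0 ω)) Pr)
    (hindep : iIndepFun (fun k ω => (ξ k ω, η k ω)) Pr)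
    -- the random walk S and the number of renewals ρ(x) = #{k ≥ 0 : S_k ≤ x}
    (S : ℕ → Ω → ℝ) (hS : ∀ k ω, S k ω = ∑ i ∈ Finset.range k, ξ i ω)
    (ρ : ℝ → Ω → ℕ) (hρ : ∀ x ω, ρ x ω = Set.ncard {k : ℕ | S k ω ≤ x})
    -- the perturbed-walk counting process N
    (N : ℝ → Ω → ℕ) (hN : ∀ x ω, N x ω = Set.ncard {k : ℕ | S k ω + η k ω ≤ x})
    -- F, the distribution function of η
    (F : ℝ → ℝ) (hF : ∀ t, F t = (Pr {ω | η 0 ω ≤ t}).toReal)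
    -- the renewal shot-noise process M
    (M : ℝ → Ω → ℝ) (hM : ∀ x ω, M x ω = ∑ k ∈ Finset.range (ρ x ω), F (x - S k ω)) :
    ∀ x : ℝ, 0 ≤ x →
      (∫ ω, ((N x ω : ℝ) - M x ω) ^ 2 ∂Pr) =
        ∫ y in Set.Icc (0 : ℝ) x, F (x - y) * (1 - F (x - y))
          ∂(Measure.sum fun k : ℕ => Measure.map (S k) Pr) := by
  intro x _
  have hξ : ∀ k, Measurable (ξ k) := fun k => (hmeas k).fst
  have hη : ∀ k, Measurable (η k) := fun k => (hmeas k).snd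
  have hSm : ∀ k, Measurable fun ω => ∑ i ∈ Finset.range k, ξ i ω :=
    fun k => Finset.measurable_sum _ fun i _ => hξ i
  have hξ0 : ∀ k, ∀ᵐ ω ∂Pr, 0 ≤ ξ k ω := fun k => (hpos k).mono fun _ h => h.le
  have hstep : ∀ k, IdentDistrib (fun ω => (ξ k ω, η k ω)) (fun ω => (ξ 0 ω, η 0 ω)) Pr Pr :=
    fun k => ⟨(hmeas k).aemeasurable, (hmeas 0).aemeasurable, hid k⟩
  set ν := Pr.map (η 0)
  have : IsProbabilityMeasure ν := Measure.isProbabilityMeasure_map (hη 0).aemeasurable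
  have hν : ∀ k, Pr.map (η k) = ν := fun k => ((hstep k).comp measurable_snd).map_eq
  have hν0 : ∀ᵐ y ∂ν, 0 ≤ y := (ae_map_iff (hη 0).aemeasurable measurableSet_Ici).2 (hnonneg 0)
  obtain rfl : F = cdf ν := funext fun t => by
    rw [hF, cdf_eq_real, map_measureReal_apply (hη 0) measurableSet_Iic]; rfl
  obtain rfl : S = fun k ω => ∑ i ∈ Finset.range k, ξ i ω := funext fun k => funext (hS k)
  simp only [hN, hM, hρ]
  have hA := measure_sum_range_le_le hξ (hindep.comp _ fun _ => measurable_fst)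
    (fun k => (hstep k).comp measurable_fst) hξ0 x
  have hr := ENNReal.ofReal_lt_one.2
    (mgf_lt_one_of_pos (hξ 0).aemeasurable (hpos 0) neg_one_lt_zero)
  have hsum := tsum_measure_ne_top_of_le_geometric ENNReal.ofReal_ne_top hr hA
  refine tendsto_nhds_unique (tendsto_integral_sq_sum_range_cdfResidual ν hν0 hSm hη
    (ae_monotone_sum_range hξ0) (ae_all_iff.2 hnonneg) hsum
    (tsum_tsum_measure_inter_ne_top_of_le_geometric ENNReal.ofReal_ne_top hr hA)) ?_
  simp_rw [integral_sq_sum_range_cdfResidual hmeas hindep hν hν0 hξ0 x]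
  exact (hasSum_setIntegral_cdf_mul_one_sub_cdf hSm ν hsum).tendsto_sum_nat

/-- **Lemma 4 (Lemma `shot`), exact formula.** For every `x ≥ 0`,
`𝔼(N(x) − M(x))² = ∫₀^x F(x−y)(1 − F(x−y)) dU(y)`, where `F` is the distribution function
of `η`, `M` is the renewal shot-noise process and `U(x) = 𝔼ρ(x)` is the renewal function
(whose Lebesgue–Stieltjes measure is `Σ_k law(S_k)`). -/
theorem perturbed_rw_shot_noise_variance
    {Ω : Type*} [MeasurableSpace Ω] (Pr : Measure Ω) [IsProbabilityMeasure Pr]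
    (ξ η : ℕ → Ω → ℝ)
    (hmeas : ∀ k, Measurable (fun ω => (ξ k ω, η k ω)))
    -- ξ > 0 and η ≥ 0
    (hpos : ∀ k, ∀ᵐ ω ∂Pr, 0 < ξ k ω) (hnonneg : ∀ k, ∀ᵐ ω ∂Pr, 0 ≤ η k ω)
    -- (ξ_k, η_k)_{k≥1} are i.i.d. copies of the vector (ξ, η)
    (hid : ∀ k, Measure.map (fun ω => (ξ k ω, η k ω)) Pr
      = Measure.map (fun ω => (ξ 0 ω, η 0 ω)) Pr)
    (hindep : iIndepFun (fun k ω => (ξ k ω, η k ω)) Pr)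
    -- the distribution of ξ is non-lattice
    (hnonlattice : ¬ ∃ d > (0 : ℝ), ∀ᵐ ω ∂Pr, ∃ n : ℕ, ξ 0 ω = n * d)
    -- the random walk S and the number of renewals ρ(x) = #{k ≥ 0 : S_k ≤ x}
    (S : ℕ → Ω → ℝ) (hS : ∀ k ω, S k ω = ∑ i ∈ Finset.range k, ξ i ω)
    (ρ : ℝ → Ω → ℕ) (hρ : ∀ x ω, ρ x ω = Set.ncard {k : ℕ | S k ω ≤ x})
    -- the perturbed-walk counting process N
    (N : ℝ → Ω → ℕ) (hN : ∀ x ω, N x ω = Set.ncard {k : ℕ | S k ω + η k ω ≤ x})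
    -- F, the distribution function of η
    (F : ℝ → ℝ) (hF : ∀ t, F t = (Pr {ω | η 0 ω ≤ t}).toReal)
    -- the renewal shot-noise process M
    (M : ℝ → Ω → ℝ) (hM : ∀ x ω, M x ω = ∑ k ∈ Finset.range (ρ x ω), F (x - S k ω)) :
    ∀ x : ℝ, 0 ≤ x →
      (∫ ω, ((N x ω : ℝ) - M x ω) ^ 2 ∂Pr) =
        ∫ y in Set.Icc (0 : ℝ) x, F (x - y) * (1 - F (x - y))
          ∂(Measure.sum fun k : ℕ => Measure.map (S k) Pr) :=
  perturbed_rw_shot_noise_variance_general Pr ξ η hmeas hpos hnonneg hid hindep S hS ρ hρ N hN F hF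
    M hM
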